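/- Let H be a commutative Hopf algebra and A(B)^H a Hopf Galois extension. Then (A⊗_B A)^B is a right H-comodule algebra via the coaction a⊗a' ↦ (a⊗a'(0)) ⊗ a'(1), and the map κ: H → (A⊗_B A)^B, κ(h) = can^{-1}(1_A⊗h), is a convolution invertible total integral; in particular κ is an algebra map and a right H-comodule map. -/
import Mathlib


open TensorProduct LinearMap

noncomputable section

variable {k H A M : Type*} [Field k] [CommRing H] [HopfAlgebra k H]
  [Ring A] [Algebra k A] [AddCommGroup M] [Module k M]

local notation "Δ" => (Coalgebra.comul (R := k) (A := H))
local notation "εH" => (Coalgebra.counit (R := k) (A := H))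
local notation "𝒮" => (HopfAlgebra.antipode (R := k) (A := H))
local notation "mulH" => (LinearMap.mul' k H)
local notation "mulA" => (LinearMap.mul' k A)

/-- Right-hand side of the right-right (anti) Yetter-Drinfeld compatibility:
`m ⊗ h ↦ act (m₍₀₎ ⊗ h⑵) ⊗ s h⑴ * m₍₁₎ * h⑶`, where the comultiplication of `H` is `Dh`,
its multiplication is `mH` and `s` plays the role of the (inverse of the) antipode. -/
def ydRhs (mH : H ⊗[k] H →ₗ[k] H) (Dh : H →ₗ[k] H ⊗[k] H) (s : H →ₗ[k] H)
    (act : M ⊗[k] H →ₗ[k] M) (ρM : M →ₗ[k] M ⊗[k] H) : M ⊗[k] H →ₗ[k] M ⊗[k] H :=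
  lTensor M (mH ∘ₗ TensorProduct.map s mH) ∘ₗ
  (TensorProduct.assoc k M H (H ⊗[k] H)).toLinearMap ∘ₗ
  rTensor (H ⊗[k] H) (rTensor H act ∘ₗ (TensorProduct.assoc k M H H).symm.toLinearMap ∘ₗ
      lTensor M (TensorProduct.comm k H H).toLinearMap) ∘ₗ
  (tensorTensorTensorComm k M H (H ⊗[k] H) H).toLinearMap ∘ₗ
  TensorProduct.map ρM (rTensor H Dh ∘ₗ Dh)

/-- Right-hand side of the left-right anti-Yetter-Drinfeld compatibility:
`h ⊗ m ↦ act (h⑵ ⊗ m₍₀₎) ⊗ h⑶ * m₍₁₎ * s h⑴`. -/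
def aydLRRhs (mH : H ⊗[k] H →ₗ[k] H) (Dh : H →ₗ[k] H ⊗[k] H) (s : H →ₗ[k] H)
    (act : H ⊗[k] M →ₗ[k] M) (ρM : M →ₗ[k] M ⊗[k] H) : H ⊗[k] M →ₗ[k] M ⊗[k] H :=
  TensorProduct.map act
      (mH ∘ₗ lTensor H mH ∘ₗ lTensor H (lTensor H s) ∘ₗ
        lTensor H (TensorProduct.comm k H H).toLinearMap ∘ₗ
        (TensorProduct.assoc k H H H).toLinearMap) ∘ₗ
  (tensorTensorTensorComm k H (H ⊗[k] H) M H).toLinearMap ∘ₗ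
  TensorProduct.map
    ((TensorProduct.assoc k H H H).toLinearMap ∘ₗ
      (TensorProduct.comm k H (H ⊗[k] H)).toLinearMap ∘ₗ lTensor H Dh ∘ₗ Dh) ρM

/-- Right-hand side of the right-left anti-Yetter-Drinfeld compatibility:
`m ⊗ h ↦ s h⑶ * m₍₋₁₎ * h⑴ ⊗ act (m₍₀₎ ⊗ h⑵)`. -/
def aydRLRhs (mH : H ⊗[k] H →ₗ[k] H) (Dh : H →ₗ[k] H ⊗[k] H) (s : H →ₗ[k] H)
    (act : M ⊗[k] H →ₗ[k] M) (lρ : M →ₗ[k] H ⊗[k] M) : M ⊗[k] H →ₗ[k] H ⊗[k] M :=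
  rTensor M (mH ∘ₗ (TensorProduct.comm k H H).toLinearMap ∘ₗ lTensor H s) ∘ₗ
  (TensorProduct.assoc k H H M).symm.toLinearMap ∘ₗ
  lTensor H (TensorProduct.comm k M H).toLinearMap ∘ₗ
  TensorProduct.map mH (rTensor H act ∘ₗ (TensorProduct.assoc k M H H).symm.toLinearMap) ∘ₗ
  (tensorTensorTensorComm k H M H (H ⊗[k] H)).toLinearMap ∘ₗ
  TensorProduct.map lρ (lTensor H Dh ∘ₗ Dh)

/-- `sandwich p q (a ⊗ (x ⊗ y)) = p x * a * q y`. -/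
def sandwich (p q : H →ₗ[k] A) : A ⊗[k] (H ⊗[k] H) →ₗ[k] A :=
  mulA ∘ₗ TensorProduct.map (mulA ∘ₗ TensorProduct.map p LinearMap.id) q ∘ₗ
    rTensor H (TensorProduct.comm k A H).toLinearMap ∘ₗ
    (TensorProduct.assoc k A H H).symm.toLinearMap

/-- The right `H`-action `a · h = g h⑴ * a * f h⑵` attached to a total integral `f` with
convolution inverse `g`. -/
def intAct (Dh : H →ₗ[k] H ⊗[k] H) (f g : H →ₗ[k] A) : A ⊗[k] H →ₗ[k] A :=
  sandwich g f ∘ₗ lTensor A Dh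

/-- The left `H`-action `h · a = f h⑵ * a * g h⑴`. -/
def intActL (Dh : H →ₗ[k] H ⊗[k] H) (f g : H →ₗ[k] A) : H ⊗[k] A →ₗ[k] A :=
  sandwich f g ∘ₗ lTensor A ((TensorProduct.comm k H H).toLinearMap ∘ₗ Dh) ∘ₗ
    (TensorProduct.comm k H A).toLinearMap

/-- The set of coinvariants `B = {a | ρ a = a ⊗ 1}`. -/
def coinv (ρA : A →ₗ[k] A ⊗[k] H) : Set A := {a : A | ρA a = a ⊗ₜ[k] (1 : H)}

/-- The canonical Galois map `A ⊗ A → A ⊗ H`, `a ⊗ a' ↦ a * a'₍₀₎ ⊗ a'₍₁₎`. -/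
def canMap (ρA : A →ₗ[k] A ⊗[k] H) : A ⊗[k] A →ₗ[k] A ⊗[k] H :=
  rTensor H mulA ∘ₗ (TensorProduct.assoc k A A H).symm.toLinearMap ∘ₗ lTensor A ρA

/-- The kernel of `A ⊗ A → A ⊗_B A`: the span of the elements `(a*b) ⊗ a' - a ⊗ (b*a')`
with `b` a coinvariant; so `A ⊗_B A = (A ⊗ A) ⧸ galRel ρA`. -/
def galRel (ρA : A →ₗ[k] A ⊗[k] H) : Submodule k (A ⊗[k] A) :=
  Submodule.span k {x : A ⊗[k] A |
    ∃ a a' b : A, b ∈ coinv ρA ∧ x = (a * b) ⊗ₜ[k] a' - a ⊗ₜ[k] (b * a')}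

/-- The span of the commutators `[A, B]`, `B` the coinvariants; `A_B = A ⧸ commSub ρA`. -/
def commSub (ρA : A →ₗ[k] A ⊗[k] H) : Submodule k A :=
  Submodule.span k {x : A | ∃ a b : A, b ∈ coinv ρA ∧ x = a * b - b * a}

/-- `δ(h⑴) • s h⑵`, the twisted antipode. -/
def twistS (δl : H →ₗ[k] k) (s : H →ₗ[k] H) (Dh : H →ₗ[k] H ⊗[k] H) : H →ₗ[k] H :=
  (TensorProduct.lid k H).toLinearMap ∘ₗ TensorProduct.map δl s ∘ₗ Dh

set_option maxHeartbeats 1000000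
set_option synthInstance.maxHeartbeats 400000

section lemmas
variable (ρA : A →ₗ[k] A ⊗[k] H)

lemma canMap_tmul (a a' : A) :
    canMap ρA (a ⊗ₜ[k] a') = rTensor H (mulLeft k a) (ρA a') := by
  simp only [canMap, coe_comp, Function.comp_apply, LinearEquiv.coe_coe, lTensor_tmul]
  generalize ρA a' = t
  induction t using TensorProduct.induction_on with
  | zero => simp only [tmul_zero, map_zero]
  | tmul c h =>
      simp only [assoc_symm_tmul, rTensor_tmul, mul'_apply, mulLeft_apply]
  | add u v hu hv => simp only [tmul_add, map_add, hu, hv]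

lemma assoc_symm_mk {P Q : Type*} [AddCommGroup P] [Module k P] [AddCommGroup Q] [Module k Q]
    (a : A) (s : P ⊗[k] Q) :
    (TensorProduct.assoc k A P Q).symm (a ⊗ₜ[k] s) = rTensor Q (TensorProduct.mk k A P a) s := by
  induction s using TensorProduct.induction_on with
  | zero => simp only [tmul_zero, map_zero]
  | tmul c h => simp only [assoc_symm_tmul, rTensor_tmul, mk_apply]
  | add u v hu hv => simp only [tmul_add, map_add, hu, hv]

/-- common shape: pushing `rTensor ρA` through. -/
lemma rTensor_fact {W : Type*} [AddCommGroup W] [Module k W]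
    (f : A →ₗ[k] W) (g : A →ₗ[k] W ⊗[k] H) (hg : ∀ c : A, g c = rTensor H f (ρA c))
    (t : A ⊗[k] H) :
    rTensor H g t = rTensor H (rTensor H f) (rTensor H ρA t) := by
  induction t using TensorProduct.induction_on with
  | zero => simp only [map_zero]
  | tmul c h => simp only [rTensor_tmul, hg]
  | add u v hu hv => simp only [map_add, hu, hv]

lemma comul_shift {W : Type*} [AddCommGroup W] [Module k W] (f : A →ₗ[k] W) (s : A ⊗[k] H) :
    rTensor H (rTensor H f) ((TensorProduct.assoc k A H H).symm (lTensor A Δ s)) =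
      (TensorProduct.assoc k W H H).symm (lTensor W Δ (rTensor H f s)) := by
  induction s using TensorProduct.induction_on with
  | zero => simp only [map_zero]
  | tmul c h =>
      simp only [lTensor_tmul, rTensor_tmul]
      generalize Δ h = w
      induction w using TensorProduct.induction_on with
      | zero => simp only [tmul_zero, map_zero]
      | tmul g g' => simp only [assoc_symm_tmul, rTensor_tmul]
      | add u v hu hv => simp only [tmul_add, map_add, hu, hv]
  | add u v hu hv => simp only [map_add, hu, hv]
end lemmas

section lemmas2
variable (ρA : A →ₗ[k] A ⊗[k] H)

lemma can_coassoc
    (hρ_coassoc : (TensorProduct.assoc k A H H).toLinearMap ∘ₗ rTensor H ρA ∘ₗ ρA =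
      lTensor A Δ ∘ₗ ρA) (x : A ⊗[k] A) :
    rTensor H (canMap ρA) ((TensorProduct.assoc k A A H).symm (lTensor A ρA x)) =
      (TensorProduct.assoc k A H H).symm (lTensor A Δ (canMap ρA x)) := by
  induction x using TensorProduct.induction_on with
  | zero => simp only [map_zero]
  | tmul a a' =>
      have hco : rTensor H ρA (ρA a') =
          (TensorProduct.assoc k A H H).symm (lTensor A Δ (ρA a')) := by
        have h1 := LinearMap.congr_fun hρ_coassoc a'
        simp only [coe_comp, Function.comp_apply, LinearEquiv.coe_coe] at h1
        rw [← h1, LinearEquiv.symm_apply_apply]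
      rw [canMap_tmul, lTensor_tmul, assoc_symm_mk, ← rTensor_comp_apply,
        rTensor_fact ρA (mulLeft k a) (canMap ρA ∘ₗ TensorProduct.mk k A A a)
          (fun c => by simp only [coe_comp, Function.comp_apply, mk_apply, canMap_tmul]),
        hco, comul_shift]
  | add u v hu hv => simp only [map_add, hu, hv]

lemma rho_coassoc
    (hρ_coassoc : (TensorProduct.assoc k A H H).toLinearMap ∘ₗ rTensor H ρA ∘ₗ ρA =
      lTensor A Δ ∘ₗ ρA) (x : A ⊗[k] A) :
    (TensorProduct.assoc k (A ⊗[k] A) H H)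
      (rTensor H ((TensorProduct.assoc k A A H).symm.toLinearMap ∘ₗ lTensor A ρA)
        ((TensorProduct.assoc k A A H).symm (lTensor A ρA x))) =
      lTensor (A ⊗[k] A) Δ ((TensorProduct.assoc k A A H).symm (lTensor A ρA x)) := by
  induction x using TensorProduct.induction_on with
  | zero => simp only [map_zero]
  | tmul a a' =>
      have hco : rTensor H ρA (ρA a') =
          (TensorProduct.assoc k A H H).symm (lTensor A Δ (ρA a')) := by
        have h1 := LinearMap.congr_fun hρ_coassoc a'
        simp only [coe_comp, Function.comp_apply, LinearEquiv.coe_coe] at h1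
        rw [← h1, LinearEquiv.symm_apply_apply]
      rw [lTensor_tmul, assoc_symm_mk, ← rTensor_comp_apply,
        rTensor_fact ρA (TensorProduct.mk k A A a)
          (((TensorProduct.assoc k A A H).symm.toLinearMap ∘ₗ lTensor A ρA) ∘ₗ
            TensorProduct.mk k A A a)
          (fun c => by
            simp only [coe_comp, Function.comp_apply, mk_apply, LinearEquiv.coe_coe,
              lTensor_tmul, assoc_symm_mk]),
        hco, comul_shift, LinearEquiv.apply_symm_apply]
  | add u v hu hv => simp only [map_add, hu, hv]

lemma rho_counit
    (hρ_counit : (TensorProduct.rid k A).toLinearMap ∘ₗ lTensor A εH ∘ₗ ρA = LinearMap.id)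
    (x : A ⊗[k] A) :
    (TensorProduct.rid k (A ⊗[k] A))
      (lTensor (A ⊗[k] A) εH ((TensorProduct.assoc k A A H).symm (lTensor A ρA x))) = x := by
  induction x using TensorProduct.induction_on with
  | zero => simp only [map_zero]
  | tmul a a' =>
      have hc : (TensorProduct.rid k A) (lTensor A εH (ρA a')) = a' := by
        have h1 := LinearMap.congr_fun hρ_counit a'
        simpa only [coe_comp, Function.comp_apply, LinearEquiv.coe_coe, id_coe, id_eq] using h1
      rw [lTensor_tmul]
      have key : ∀ t : A ⊗[k] H,
          (TensorProduct.rid k (A ⊗[k] A))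
            (lTensor (A ⊗[k] A) εH ((TensorProduct.assoc k A A H).symm (a ⊗ₜ[k] t))) =
          a ⊗ₜ[k] ((TensorProduct.rid k A) (lTensor A εH t)) := by
        intro t
        induction t using TensorProduct.induction_on with
        | zero => simp only [tmul_zero, map_zero]
        | tmul c h =>
            simp only [assoc_symm_tmul, lTensor_tmul, rid_tmul, tmul_smul, smul_tmul']
        | add u v hu hv => simp only [tmul_add, map_add, hu, hv]
      rw [key, hc]
  | add u v hu hv => simp only [map_add, hu, hv]

lemma can_mulLeft (b : A) (x : A ⊗[k] A) :
    canMap ρA (rTensor A (mulLeft k b) x) = rTensor H (mulLeft k b) (canMap ρA x) := by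
  induction x using TensorProduct.induction_on with
  | zero => simp only [map_zero]
  | tmul a a' =>
      rw [rTensor_tmul, canMap_tmul, canMap_tmul, mulLeft_apply, ← rTensor_comp_apply,
        ← mulLeft_mul]
  | add u v hu hv => simp only [map_add, hu, hv]

lemma can_mulRight (hρ_mul : ∀ x y : A, ρA (x * y) = ρA x * ρA y)
    {b : A} (hb : ρA b = b ⊗ₜ[k] (1 : H)) (x : A ⊗[k] A) :
    canMap ρA (lTensor A (mulRight k b) x) = rTensor H (mulRight k b) (canMap ρA x) := by
  induction x using TensorProduct.induction_on with
  | zero => simp only [map_zero]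
  | tmul a a' =>
      rw [lTensor_tmul, mulRight_apply, canMap_tmul, canMap_tmul, hρ_mul, hb]
      generalize ρA a' = s
      induction s using TensorProduct.induction_on with
      | zero => simp only [zero_mul, map_zero]
      | tmul c h =>
          simp only [Algebra.TensorProduct.tmul_mul_tmul, mul_one, rTensor_tmul,
            mulLeft_apply, mulRight_apply, mul_assoc]
      | add u v hu hv => simp only [add_mul, map_add, hu, hv]
  | add u v hu hv => simp only [map_add, hu, hv]
end lemmas2

def nuMap0 (ρA : A →ₗ[k] A ⊗[k] H) : A ⊗[k] H →ₗ[k] A ⊗[k] H :=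
  LinearMap.mul' k (A ⊗[k] H) ∘ₗ TensorProduct.map ρA (TensorProduct.mk k A H 1)

def phiMap0 (ρA : A →ₗ[k] A ⊗[k] H) :
    (A ⊗[k] A) ⊗[k] (A ⊗[k] H) →ₗ[k] A ⊗[k] H :=
  rTensor H mulA ∘ₗ (TensorProduct.assoc k A A H).symm.toLinearMap ∘ₗ
    TensorProduct.map mulA (nuMap0 ρA) ∘ₗ
    (tensorTensorTensorComm k A A A H).toLinearMap

def mMap0 : (A ⊗[k] A) ⊗[k] (A ⊗[k] A) →ₗ[k] A ⊗[k] A :=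
  TensorProduct.map mulA (mulA ∘ₗ (TensorProduct.comm k A A).toLinearMap) ∘ₗ
    (tensorTensorTensorComm k A A A A).toLinearMap

section lemmas3
variable (ρA : A →ₗ[k] A ⊗[k] H)

lemma phi_one (x : A ⊗[k] A) (h' : H) :
    phiMap0 ρA (x ⊗ₜ[k] ((1 : A) ⊗ₜ[k] h')) =
      lTensor A (mulRight k h') (canMap ρA x) := by
  induction x using TensorProduct.induction_on with
  | zero => simp only [zero_tmul, map_zero]
  | tmul a a' =>
      rw [canMap_tmul]
      simp only [phiMap0, nuMap0, coe_comp, Function.comp_apply, LinearEquiv.coe_coe,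
        tensorTensorTensorComm_tmul, map_tmul, mul'_apply, mk_apply, mul_one]
      generalize ρA a' = t
      induction t using TensorProduct.induction_on with
      | zero => simp only [zero_mul, map_zero, tmul_zero]
      | tmul f g =>
          simp only [Algebra.TensorProduct.tmul_mul_tmul, mul_one, assoc_symm_tmul,
            rTensor_tmul, lTensor_tmul, mul'_apply, mulLeft_apply, mulRight_apply]
      | add u v hu hv => simp only [add_mul, map_add, tmul_add, hu, hv]
  | add u v hu hv => simp only [add_tmul, map_add, hu, hv]

lemma can_mMap (hρ_mul : ∀ x y : A, ρA (x * y) = ρA x * ρA y)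
    (z : (A ⊗[k] A) ⊗[k] (A ⊗[k] A)) :
    canMap ρA (mMap0 z) = phiMap0 ρA (lTensor (A ⊗[k] A) (canMap ρA) z) := by
  induction z using TensorProduct.induction_on with
  | zero => simp only [map_zero]
  | tmul x y =>
      induction x using TensorProduct.induction_on with
      | zero => simp only [zero_tmul, map_zero]
      | tmul a a' =>
          induction y using TensorProduct.induction_on with
          | zero => simp only [tmul_zero, map_zero]
          | tmul c c' =>
              simp only [mMap0, coe_comp, Function.comp_apply, LinearEquiv.coe_coe,
                tensorTensorTensorComm_tmul, map_tmul, mul'_apply, comm_tmul, lTensor_tmul]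
              rw [canMap_tmul, canMap_tmul, hρ_mul]
              generalize ρA c' = s
              induction s using TensorProduct.induction_on with
              | zero => simp only [zero_mul, map_zero, tmul_zero]
              | tmul e g =>
                  simp only [rTensor_tmul, mulLeft_apply]
                  simp only [phiMap0, nuMap0, coe_comp, Function.comp_apply,
                    LinearEquiv.coe_coe, tensorTensorTensorComm_tmul, map_tmul, mul'_apply,
                    mk_apply]
                  generalize ρA a' = t
                  induction t using TensorProduct.induction_on with
                  | zero => simp only [zero_mul, mul_zero, map_zero, tmul_zero]
                  | tmul f h =>
                      simp only [Algebra.TensorProduct.tmul_mul_tmul, mul_one, one_mul,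
                        assoc_symm_tmul, rTensor_tmul, mul'_apply, mulLeft_apply, mul_assoc]
                      rw [mul_comm g h]
                  | add u v hu hv =>
                      simp only [add_mul, mul_add, map_add, tmul_add, hu, hv]
              | add u v hu hv => simp only [add_mul, map_add, tmul_add, hu, hv]
          | add u v hu hv => simp only [tmul_add, map_add, hu, hv]
      | add u v hu hv => simp only [add_tmul, map_add, hu, hv]
  | add u v hu hv => simp only [map_add, hu, hv]
end lemmas3

/-- For a commutative Hopf algebra `H` and a Hopf Galois extension `A(B)^H`,
the space `(A ⊗_B A)^B` is a right `H`-comodule algebra via `a ⊗ a' ↦ a ⊗ a'₍₀₎ ⊗ a'₍₁₎`, and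
`κ h = can⁻¹ (1 ⊗ h)` is a convolution invertible total integral; in particular `κ` is an
algebra map and an `H`-comodule map.  (Everything is expressed through representatives in
`A ⊗ A`, with `qB` the projection onto `A ⊗_B A = (A ⊗ A) ⧸ galRel ρA`.) -/
theorem commutative_galois_gives_convolution_invertible_total_integral
    (ρA : A →ₗ[k] A ⊗[k] H)
    (hρ_coassoc : (TensorProduct.assoc k A H H).toLinearMap ∘ₗ rTensor H ρA ∘ₗ ρA =
      lTensor A Δ ∘ₗ ρA)
    (hρ_counit : (TensorProduct.rid k A).toLinearMap ∘ₗ lTensor A εH ∘ₗ ρA = LinearMap.id)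
    (hρ_one : ρA 1 = (1 : A) ⊗ₜ[k] (1 : H))
    (hρ_mul : ∀ x y : A, ρA (x * y) = ρA x * ρA y)
    (hGal_surj : Function.Surjective (canMap ρA))
    (hGal_ker : LinearMap.ker (canMap ρA) = galRel ρA)
 :
    (∀ x ∈ galRel ρA, rTensor H (galRel ρA).mkQ (((TensorProduct.assoc k A A H).symm.toLinearMap ∘ₗ lTensor A ρA) x) = 0) ∧
    (∀ x : A ⊗[k] A,
      rTensor (H ⊗[k] H) (galRel ρA).mkQ
        ((TensorProduct.assoc k (A ⊗[k] A) H H).toLinearMap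
          (rTensor H ((TensorProduct.assoc k A A H).symm.toLinearMap ∘ₗ lTensor A ρA) (((TensorProduct.assoc k A A H).symm.toLinearMap ∘ₗ lTensor A ρA) x))) =
      rTensor (H ⊗[k] H) (galRel ρA).mkQ (lTensor (A ⊗[k] A) Δ (((TensorProduct.assoc k A A H).symm.toLinearMap ∘ₗ lTensor A ρA) x))) ∧
    (∀ x : A ⊗[k] A,
      (galRel ρA).mkQ ((TensorProduct.rid k (A ⊗[k] A))
        (lTensor (A ⊗[k] A) εH
          (((TensorProduct.assoc k A A H).symm.toLinearMap ∘ₗ lTensor A ρA) x))) =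
      (galRel ρA).mkQ x) ∧
    (∃ K : H →ₗ[k] A ⊗[k] A,
      (∀ h : H, canMap ρA (K h) = (1 : A) ⊗ₜ[k] h) ∧
      (∀ h : H, ∀ b ∈ coinv ρA,
        (galRel ρA).mkQ (rTensor A (LinearMap.mulLeft k b) (K h)) =
        (galRel ρA).mkQ (lTensor A (LinearMap.mulRight k b) (K h))) ∧
      ((galRel ρA).mkQ (K 1) = (galRel ρA).mkQ ((1 : A) ⊗ₜ[k] (1 : A))) ∧
      (∀ h h' : H,
        (galRel ρA).mkQ ((TensorProduct.map mulA (mulA ∘ₗ (TensorProduct.comm k A A).toLinearMap) ∘ₗ (tensorTensorTensorComm k A A A A).toLinearMap) (K h ⊗ₜ[k] K h')) = (galRel ρA).mkQ (K (h * h'))) ∧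
      (∀ h : H,
        rTensor H (galRel ρA).mkQ (((TensorProduct.assoc k A A H).symm.toLinearMap ∘ₗ lTensor A ρA) (K h)) =
        rTensor H (galRel ρA).mkQ (rTensor H K (Δ h))) ∧
      (∃ K' : H →ₗ[k] A ⊗[k] A, ∀ h : H,
        (galRel ρA).mkQ ((TensorProduct.map mulA (mulA ∘ₗ (TensorProduct.comm k A A).toLinearMap) ∘ₗ (tensorTensorTensorComm k A A A A).toLinearMap) (TensorProduct.map K K' (Δ h))) =
          εH h • (galRel ρA).mkQ ((1 : A) ⊗ₜ[k] (1 : A)) ∧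
        (galRel ρA).mkQ ((TensorProduct.map mulA (mulA ∘ₗ (TensorProduct.comm k A A).toLinearMap) ∘ₗ (tensorTensorTensorComm k A A A A).toLinearMap) (TensorProduct.map K' K (Δ h))) =
          εH h • (galRel ρA).mkQ ((1 : A) ⊗ₜ[k] (1 : A)))) := by
  classical
  obtain ⟨σ, hσ⟩ := (canMap ρA).exists_rightInverse_of_surjective
    (LinearMap.range_eq_top.2 hGal_surj)
  set K : H →ₗ[k] A ⊗[k] A := σ ∘ₗ TensorProduct.mk k A H 1 with hKdef
  have hK : ∀ h : H, canMap ρA (K h) = (1 : A) ⊗ₜ[k] h := by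
    intro h
    have h1 := LinearMap.congr_fun hσ ((1 : A) ⊗ₜ[k] h)
    simpa [hKdef] using h1
  have hcanone : canMap ρA ((1 : A) ⊗ₜ[k] (1 : A)) = (1 : A) ⊗ₜ[k] (1 : H) := by
    rw [canMap_tmul, hρ_one, rTensor_tmul, mulLeft_apply, mul_one]
  have hmem : ∀ u : A ⊗[k] A, u ∈ galRel ρA ↔ canMap ρA u = 0 := by
    intro u; rw [← hGal_ker, LinearMap.mem_ker]
  have hq_eq : ∀ u v : A ⊗[k] A, canMap ρA u = canMap ρA v →
      (galRel ρA).mkQ u = (galRel ρA).mkQ v := by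
    intro u v huv
    rw [Submodule.mkQ_apply, Submodule.mkQ_apply, Submodule.Quotient.eq, ← hGal_ker,
      LinearMap.mem_ker, map_sub, huv, sub_self]
  have hle : galRel ρA ≤ ker (canMap ρA) := le_of_eq hGal_ker.symm
  set e : (A ⊗[k] A ⧸ galRel ρA) →ₗ[k] A ⊗[k] H := (galRel ρA).liftQ (canMap ρA) hle
    with hedef
  have he : ∀ u, e ((galRel ρA).mkQ u) = canMap ρA u := fun u => rfl
  have hebij : Function.Bijective e := by
    constructor
    · rw [← LinearMap.ker_eq_bot]
      exact Submodule.ker_liftQ_eq_bot _ _ _ (le_of_eq hGal_ker)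
    · intro y
      obtain ⟨x, hx⟩ := hGal_surj y
      exact ⟨(galRel ρA).mkQ x, by rw [he, hx]⟩
  set e' : (A ⊗[k] A ⧸ galRel ρA) ≃ₗ[k] A ⊗[k] H := LinearEquiv.ofBijective e hebij
    with he'def
  have hfact : (galRel ρA).mkQ = e'.symm.toLinearMap ∘ₗ canMap ρA := by
    apply LinearMap.ext; intro u
    apply e'.injective
    rw [coe_comp, Function.comp_apply, LinearEquiv.coe_coe, LinearEquiv.apply_symm_apply]
    exact he u
  have hq3 : ∀ u v : (A ⊗[k] A) ⊗[k] H,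
      rTensor H (canMap ρA) u = rTensor H (canMap ρA) v →
      rTensor H ((galRel ρA).mkQ) u = rTensor H ((galRel ρA).mkQ) v := by
    intro u v huv
    rw [hfact, rTensor_comp, coe_comp, Function.comp_apply, Function.comp_apply, huv]
  have hMM : ∀ w : H ⊗[k] H,
      canMap ρA
        ((TensorProduct.map mulA (mulA ∘ₗ (TensorProduct.comm k A A).toLinearMap) ∘ₗ
          (tensorTensorTensorComm k A A A A).toLinearMap) (TensorProduct.map K K w)) =
        (1 : A) ⊗ₜ[k] (mulH w) := by
    intro w
    show canMap ρA (mMap0 (TensorProduct.map K K w)) = (1 : A) ⊗ₜ[k] (mulH w)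
    induction w using TensorProduct.induction_on with
    | zero => simp only [map_zero, tmul_zero]
    | tmul g g' =>
        rw [map_tmul, can_mMap ρA hρ_mul, lTensor_tmul, hK, phi_one, hK, lTensor_tmul,
          mulRight_apply, mul'_apply]
    | add u v hu hv => simp only [map_add, hu, hv, tmul_add]
  refine ⟨?_, ?_, ?_, K, hK, ?_, ?_, ?_, ?_, ⟨K ∘ₗ 𝒮, ?_⟩⟩
  · -- (1) well-definedness of the coaction
    intro x hx
    have h0 : rTensor H (canMap ρA)
        (((TensorProduct.assoc k A A H).symm.toLinearMap ∘ₗ lTensor A ρA) x) =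
        rTensor H (canMap ρA) 0 := by
      simp only [coe_comp, Function.comp_apply, LinearEquiv.coe_coe, map_zero]
      rw [can_coassoc ρA hρ_coassoc x, (hmem x).1 hx, map_zero, map_zero]
    have h1 := hq3 _ _ h0
    rwa [map_zero] at h1
  · -- (2) coassociativity
    intro x
    have h2 := rho_coassoc ρA hρ_coassoc x
    simp only [coe_comp, Function.comp_apply, LinearEquiv.coe_coe] at h2 ⊢
    rw [h2]
  · -- (3) counit
    intro x
    have h3 := rho_counit ρA hρ_counit x
    simp only [coe_comp, Function.comp_apply, LinearEquiv.coe_coe] at h3 ⊢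
    rw [h3]
  · -- (4) B-centrality of K
    intro h b hb
    have hb' : ρA b = b ⊗ₜ[k] (1 : H) := hb
    apply hq_eq
    rw [can_mulLeft, can_mulRight ρA hρ_mul hb', hK, rTensor_tmul, rTensor_tmul,
      mulLeft_apply, mulRight_apply, mul_one, one_mul]
  · -- (5) K is unital
    apply hq_eq
    rw [hK, hcanone]
  · -- (6) K is multiplicative
    intro h h'
    apply hq_eq
    have h6 := hMM (h ⊗ₜ[k] h')
    rw [map_tmul, mul'_apply] at h6
    rw [hK]
    exact h6
  · -- (7) K is a comodule map
    intro h
    apply hq3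
    simp only [coe_comp, Function.comp_apply, LinearEquiv.coe_coe]
    rw [can_coassoc ρA hρ_coassoc (K h), hK, lTensor_tmul, assoc_symm_mk,
      ← rTensor_comp_apply]
    have hcomp : canMap ρA ∘ₗ K = TensorProduct.mk k A H 1 := LinearMap.ext hK
    rw [hcomp]
  · -- (8) convolution invertibility
    intro h
    have hσS : ∀ w : H ⊗[k] H,
        TensorProduct.map K (K ∘ₗ 𝒮) w = TensorProduct.map K K (lTensor H 𝒮 w) := by
      intro w
      induction w using TensorProduct.induction_on with
      | zero => simp only [map_zero]
      | tmul g g' => simp only [map_tmul, lTensor_tmul, coe_comp, Function.comp_apply]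
      | add u v hu hv => simp only [map_add, hu, hv]
    have hSσ : ∀ w : H ⊗[k] H,
        TensorProduct.map (K ∘ₗ 𝒮) K w = TensorProduct.map K K (rTensor H 𝒮 w) := by
      intro w
      induction w using TensorProduct.induction_on with
      | zero => simp only [map_zero]
      | tmul g g' => simp only [map_tmul, rTensor_tmul, coe_comp, Function.comp_apply]
      | add u v hu hv => simp only [map_add, hu, hv]
    have hsmul : (εH h) • (galRel ρA).mkQ ((1 : A) ⊗ₜ[k] (1 : A)) =
        (galRel ρA).mkQ ((εH h) • ((1 : A) ⊗ₜ[k] (1 : A))) := (map_smul _ _ _).symm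
    have hcansmul : canMap ρA ((εH h) • ((1 : A) ⊗ₜ[k] (1 : A))) =
        (1 : A) ⊗ₜ[k] (algebraMap k H (εH h)) := by
      rw [map_smul, hcanone, Algebra.algebraMap_eq_smul_one, tmul_smul]
    constructor
    · rw [hσS, hsmul]
      apply hq_eq
      rw [hMM, hcansmul, HopfAlgebra.mul_antipode_lTensor_comul_apply]
    · rw [hSσ, hsmul]
      apply hq_eq
      rw [hMM, hcansmul, HopfAlgebra.mul_antipode_rTensor_comul_apply]
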